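/- arXiv:1403.5954 — 8 statements merged into one kernel-verified Lean document; each statement's English description precedes it below -/
import Mathlib

section
/- The set of ∘-vectors of the quotient group K̄ = K/K_{σ,ε}, i.e., those t̄ ∈ K̄ such that t̄∘(λ+μ) = t̄∘λ + t̄∘μ for all λ,μ ∈ K, equals K^{σ,ε}/K_{σ,ε}. -/
/-- `K_{σ,ε} = {t - t^σ·ε : t ∈ K}`. -/
def Kse {K : Type*} [DivisionRing K] (σ : K → K) (ε : K) : Set K :=
  {x : K | ∃ t : K, x = t - σ t * ε}

/-- `K^{σ,ε} = {t ∈ K : t = -t^σ·ε}`. -/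
def Kup {K : Type*} [DivisionRing K] (σ : K → K) (ε : K) : Set K :=
  {t : K | t = -(σ t * ε)}

/-!
Writing `t̄∘(λ+μ) - t̄∘λ - t̄∘μ` as the class of `λ^σ t μ + μ^σ t λ`, the ∘-vectors are the `t̄`
with `λ^σ t μ + μ^σ t λ ∈ K_{σ,ε}` for all `λ, μ`. If `t ∈ K^{σ,ε}`, then
`λ^σ t μ + μ^σ t λ = s - s^σ ε` for `s = λ^σ t μ`. Conversely, taking `λ = 1` and using
`K_{σ,ε} ⊆ K^{σ,ε}`, the element `u = t + t^σ ε` satisfies `u μ + μ^σ u = 0` for all `μ`.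
If `u ≠ 0`, this forces characteristic `2` and `μ^σ = u μ u⁻¹`; an anti-automorphism that is
inner makes `K` commutative and `σ = id`, and then `u = t (1 + ε)` with `(1 + ε)² = 0`.
So `u = 0`, i.e. `t ∈ K^{σ,ε}`; finally `K^{σ,ε}` is a subgroup containing `K_{σ,ε}`,
so `t̄` has a representative in `K^{σ,ε}` iff `t` lies in it.
-/

namespace Kup

variable {K : Type*} [DivisionRing K] {σ : K → K} {ε : K}

theorem map_one_of_antimul (hmul : ∀ a b : K, σ (a * b) = σ b * σ a) (hε : σ ε * ε = 1) :
    σ 1 = 1 := by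
  have h : σ ε = σ 1 * σ ε := by rw [← hmul, mul_one]
  calc σ 1 = σ 1 * (σ ε * ε) := by rw [hε, mul_one]
    _ = 1 := by rw [← mul_assoc, ← h, hε]

variable (ε) in
def addSubgroup (hadd : ∀ a b : K, σ (a + b) = σ a + σ b) : AddSubgroup K where
  carrier := Kup σ ε
  zero_mem' := by
    have h0 : σ 0 = 0 := map_zero (AddMonoidHom.mk' σ hadd)
    show (0 : K) = -(σ 0 * ε)
    rw [h0, zero_mul, neg_zero]
  add_mem' := by
    intro a b (ha : a = _) (hb : b = _)
    show a + b = -(σ (a + b) * ε)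
    rw [hadd, add_mul, neg_add, ← ha, ← hb]
  neg_mem' := by
    intro a (ha : a = _)
    have hneg : σ (-a) = -σ a := map_neg (AddMonoidHom.mk' σ hadd) a
    show -a = -(σ (-a) * ε)
    rw [hneg, neg_mul, ← ha]

variable (ε) in
theorem coe_addSubgroup (hadd : ∀ a b : K, σ (a + b) = σ a + σ b) :
    (addSubgroup ε hadd : Set K) = Kup σ ε :=
  rfl

theorem kse_subset (hadd : ∀ a b : K, σ (a + b) = σ a + σ b)
    (hmul : ∀ a b : K, σ (a * b) = σ b * σ a) (hε : σ ε * ε = 1)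
    (hσ2 : ∀ t : K, σ (σ t) = ε * t * ε⁻¹) : Kse σ ε ⊆ Kup σ ε := by
  rintro _ ⟨s, rfl⟩
  show s - σ s * ε = -(σ (s - σ s * ε) * ε)
  have hinv : ε⁻¹ * ε = 1 := inv_mul_cancel₀ (right_ne_zero_of_mul_eq_one hε)
  have hsub : σ (s - σ s * ε) = σ s - σ (σ s * ε) := map_sub (AddMonoidHom.mk' σ hadd) _ _
  rw [hsub, hmul, hσ2]
  calc s - σ s * ε = -(σ s * ε) + σ ε * ε * s * (ε⁻¹ * ε) := by rw [hε, hinv]; noncomm_ring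
    _ = -((σ s - σ ε * (ε * s * ε⁻¹)) * ε) := by noncomm_ring

theorem mul_add_antimul_mem_kse (hmul : ∀ a b : K, σ (a * b) = σ b * σ a)
    (hε : σ ε * ε = 1) (hσ2 : ∀ t : K, σ (σ t) = ε * t * ε⁻¹) {t : K} (ht : t ∈ Kup σ ε)
    (lam mu : K) : σ lam * t * mu + σ mu * t * lam ∈ Kse σ ε := by
  refine ⟨σ lam * t * mu, ?_⟩
  have hinv : ε⁻¹ * ε = 1 := inv_mul_cancel₀ (right_ne_zero_of_mul_eq_one hε)
  have hσt : σ t * ε = -t := (neg_eq_iff_eq_neg.mpr ht).symm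
  simp only [hmul, hσ2]
  calc σ lam * t * mu + σ mu * t * lam
      = σ lam * t * mu - σ mu * (σ t * ε) * lam * (ε⁻¹ * ε) := by rw [hσt, hinv]; noncomm_ring
    _ = σ lam * t * mu - σ mu * (σ t * (ε * lam * ε⁻¹)) * ε := by noncomm_ring

theorem mul_comm_of_antimul_eq_conj (hmul : ∀ a b : K, σ (a * b) = σ b * σ a) {u : K}
    (hu : u ≠ 0) (hconj : ∀ a : K, σ a * u = u * a) (a b : K) : a * b = b * a := by
  refine mul_left_cancel₀ hu ?_
  calc u * (a * b) = σ b * (σ a * u) := by rw [← hconj, hmul, mul_assoc]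
    _ = u * (b * a) := by rw [hconj, ← mul_assoc, hconj, mul_assoc]

theorem eq_zero_of_forall_mul_add_antimul_eq_zero (hmul : ∀ a b : K, σ (a * b) = σ b * σ a)
    (hε : σ ε * ε = 1) {t : K} (h : ∀ mu : K, (t + σ t * ε) * mu + σ mu * (t + σ t * ε) = 0) :
    t + σ t * ε = 0 := by
  set u := t + σ t * ε with hu_def
  by_contra hu
  have two : (2 : K) = 0 := by
    have h1 := h 1
    rw [map_one_of_antimul hmul hε, mul_one, one_mul, ← two_mul] at h1
    exact (mul_eq_zero.mp h1).resolve_right hu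
  have add_self : ∀ a : K, a + a = 0 := fun a => by rw [← two_mul, two, zero_mul]
  have hconj : ∀ a : K, σ a * u = u * a := fun a =>
    (eq_neg_of_add_eq_zero_right (h a)).trans (neg_eq_of_add_eq_zero_left (add_self _))
  have hcomm := mul_comm_of_antimul_eq_conj hmul hu hconj
  have hσ : ∀ a : K, σ a = a := fun a => mul_right_cancel₀ hu (by rw [hconj, hcomm])
  have hεε : ε * ε = 1 := by simpa only [hσ] using hε
  have hsq : (1 + ε) * (1 + ε) = 0 := by
    calc (1 + ε) * (1 + ε) = 1 + (ε + ε) + ε * ε := by noncomm_ring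
      _ = 0 := by rw [hεε, add_self, add_zero, add_self]
  apply hu
  rw [hu_def, hσ, ← mul_one_add, mul_self_eq_zero.mp hsq, mul_zero]

theorem mem_of_forall_mul_add_antimul_mem (hadd : ∀ a b : K, σ (a + b) = σ a + σ b)
    (hmul : ∀ a b : K, σ (a * b) = σ b * σ a) (hε : σ ε * ε = 1)
    (hσ2 : ∀ t : K, σ (σ t) = ε * t * ε⁻¹) {t : K}
    (h : ∀ mu : K, t * mu + σ mu * t ∈ Kup σ ε) : t ∈ Kup σ ε := by
  have hinv : ε⁻¹ * ε = 1 := inv_mul_cancel₀ (right_ne_zero_of_mul_eq_one hε)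
  refine (eq_neg_iff_add_eq_zero).mpr (eq_zero_of_forall_mul_add_antimul_eq_zero hmul hε ?_)
  intro mu
  have hmu : t * mu + σ mu * t = -(σ (t * mu + σ mu * t) * ε) := h mu
  rw [hadd, hmul, hmul, hσ2] at hmu
  calc (t + σ t * ε) * mu + σ mu * (t + σ t * ε)
      = (t * mu + σ mu * t) + (σ mu * σ t + σ t * ε * mu * ε⁻¹) * ε := by
        rw [add_mul (σ mu * σ t), mul_assoc _ ε⁻¹, hinv]; noncomm_ring
    _ = 0 := by rw [hmu]; noncomm_ring

end Kup

theorem QuotientAddGroup.mk_mem_image_iff {G : Type*} [AddGroup G] {N H : AddSubgroup G}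
    (hNH : N ≤ H) (g : G) :
    (g : G ⧸ N) ∈ (fun x : G => (x : G ⧸ N)) '' H ↔ g ∈ H := by
  refine ⟨?_, fun hg => ⟨g, hg, rfl⟩⟩
  rintro ⟨x, hx, hxg⟩
  simpa using H.add_mem hx (hNH (QuotientAddGroup.eq.mp hxg))

theorem QuotientAddGroup.mk_antimul_add_iff {K : Type*} [Ring K] {σ : K → K}
    (hadd : ∀ a b : K, σ (a + b) = σ a + σ b) (N : AddSubgroup K) (t lam mu : K) :
    (QuotientAddGroup.mk (σ (lam + mu) * t * (lam + mu)) : K ⧸ N)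
        = QuotientAddGroup.mk (σ lam * t * lam) + QuotientAddGroup.mk (σ mu * t * mu)
      ↔ σ lam * t * mu + σ mu * t * lam ∈ N := by
  rw [← QuotientAddGroup.mk_add, QuotientAddGroup.eq_iff_sub_mem, hadd]
  convert Iff.rfl using 2
  noncomm_ring

theorem stmt4_general {K : Type*} [DivisionRing K] (σ : K → K) (ε : K)
    (hadd : ∀ a b : K, σ (a + b) = σ a + σ b)
    (hmul : ∀ a b : K, σ (a * b) = σ b * σ a)
    (hε : σ ε * ε = 1)
    (hσ2 : ∀ t : K, σ (σ t) = ε * t * ε⁻¹)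
    (N : AddSubgroup K) (hN : (N : Set K) = Kse σ ε) :
    ∀ t : K,
      ((∀ lam mu : K,
          (QuotientAddGroup.mk (σ (lam + mu) * t * (lam + mu)) : K ⧸ N)
            = QuotientAddGroup.mk (σ lam * t * lam)
              + QuotientAddGroup.mk (σ mu * t * mu))
        ↔ (QuotientAddGroup.mk t : K ⧸ N)
            ∈ (fun x : K => (QuotientAddGroup.mk x : K ⧸ N)) '' Kup σ ε) := by
  intro t
  have hmemN : ∀ x : K, x ∈ N ↔ x ∈ Kse σ ε := fun x => by rw [← hN, SetLike.mem_coe]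
  have hNKup : N ≤ Kup.addSubgroup ε hadd := fun x hx =>
    Kup.kse_subset hadd hmul hε hσ2 ((hmemN x).mp hx)
  simp only [QuotientAddGroup.mk_antimul_add_iff hadd, hmemN]
  rw [← Kup.coe_addSubgroup ε hadd, QuotientAddGroup.mk_mem_image_iff hNKup]
  constructor
  · intro H
    refine Kup.mem_of_forall_mul_add_antimul_mem hadd hmul hε hσ2 fun mu => ?_
    simpa only [Kup.map_one_of_antimul hmul hε, one_mul, mul_one] using Kup.kse_subset hadd hmul hε hσ2 (H 1 mu)
  · exact Kup.mul_add_antimul_mem_kse hmul hε hσ2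

/-- The set of ∘-vectors of `K̄ = K/K_{σ,ε}` (those `t̄` with
`t̄∘(λ+μ) = t̄∘λ + t̄∘μ` for all `λ,μ`, where `t̄∘λ = λ^σ·t·λ + K_{σ,ε}`)
equals `K^{σ,ε}/K_{σ,ε}`. -/
theorem stmt4 {K : Type*} [DivisionRing K] (σ : K → K) (ε : K)
    (hadd : ∀ a b : K, σ (a + b) = σ a + σ b)
    (hmul : ∀ a b : K, σ (a * b) = σ b * σ a)
    (hbij : Function.Bijective σ)
    (hε : σ ε * ε = 1)
    (hσ2 : ∀ t : K, σ (σ t) = ε * t * ε⁻¹)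
    (N : AddSubgroup K) (hN : (N : Set K) = Kse σ ε) :
    ∀ t : K,
      ((∀ lam mu : K,
          (QuotientAddGroup.mk (σ (lam + mu) * t * (lam + mu)) : K ⧸ N)
            = QuotientAddGroup.mk (σ lam * t * lam)
              + QuotientAddGroup.mk (σ mu * t * mu))
        ↔ (QuotientAddGroup.mk t : K ⧸ N)
            ∈ (fun x : K => (QuotientAddGroup.mk x : K ⧸ N)) '' Kup σ ε) :=
  stmt4_general σ ε hadd hmul hε hσ2 N hN
end

section
/- The pair (σ,ε) is of trace type (i.e., K_{σ,-ε} = K^{σ,-ε}) if and only if K^{σ,ε}/K_{σ,ε} is trivial, i.e., K^{σ,ε} = K_{σ,ε}. -/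
/-! For `δ = ±ε` the inclusion `K_{σ,δ} ⊆ K^{σ,δ}` always holds, because `σ²` is conjugation
by `δ` and `δ^σ·δ = 1`. Away from characteristic 2 the reverse inclusion holds as well, since
`t ∈ K^{σ,δ}` equals `s - s^σ·δ` for `s = t/2`; so both sides of the equivalence are true. In
characteristic 2 we have `-ε = ε` and the two sides coincide. -/

section AntiMultiplicative

variable {K : Type*} [DivisionRing K] {σ : K → K}

theorem map_one_of_map_map_one (hmul : ∀ a b : K, σ (a * b) = σ b * σ a)
    (hzero : σ 0 = 0) (h : σ (σ 1) = 1) : σ 1 = 1 := by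
  have hne : σ 1 ≠ 0 := fun h0 => by simp [h0, hzero] at h
  have hidem : σ 1 * σ 1 = σ 1 := by rw [← hmul, mul_one]
  exact (mul_eq_left₀ hne).mp hidem

theorem map_inv_of_map_eq (hmul : ∀ a b : K, σ (a * b) = σ b * σ a) (hone : σ 1 = 1)
    {a : K} (ha : a ≠ 0) (hfix : σ a = a) : σ a⁻¹ = a⁻¹ :=
  eq_inv_of_mul_eq_one_left <| by
    simpa only [mul_inv_cancel₀ ha, hone, hfix, eq_comm] using hmul a a⁻¹

theorem Kse_subset_Kup (hadd : ∀ a b : K, σ (a + b) = σ a + σ b)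
    (hmul : ∀ a b : K, σ (a * b) = σ b * σ a) {δ : K} (hδ : σ δ * δ = 1)
    (hσ2 : ∀ t : K, σ (σ t) = δ * t * δ⁻¹) : Kse σ δ ⊆ Kup σ δ := by
  rintro _ ⟨t, rfl⟩
  have hδ0 : δ ≠ 0 := right_ne_zero_of_mul_eq_one hδ
  have hσx : σ (t - σ t * δ) = σ t - t * δ⁻¹ := by
    have hsub : σ (t - σ t * δ) = σ t - σ (σ t * δ) := map_sub (AddMonoidHom.mk' σ hadd) _ _
    rw [hsub, hmul, hσ2, ← mul_assoc, ← mul_assoc, hδ, one_mul]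
  show _ = -(σ (t - σ t * δ) * δ)
  rw [hσx, sub_mul, inv_mul_cancel_right₀ hδ0, neg_sub]

theorem Kup_subset_Kse (hadd : ∀ a b : K, σ (a + b) = σ a + σ b)
    (hmul : ∀ a b : K, σ (a * b) = σ b * σ a) (hone : σ 1 = 1) (h2 : (2 : K) ≠ 0) (δ : K) :
    Kup σ δ ⊆ Kse σ δ := by
  intro t (ht : t = -(σ t * δ))
  have hσ2 : σ 2 = 2 := by rw [← one_add_one_eq_two, hadd, hone]
  have hhalf : σ (2⁻¹ * t) = 2⁻¹ * σ t := by
    rw [hmul, map_inv_of_map_eq hmul hone h2 hσ2, ((Commute.ofNat_left 2 _).inv_left₀).eq]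
  refine ⟨2⁻¹ * t, ?_⟩
  rw [hhalf, mul_assoc, ← mul_sub, sub_eq_add_neg, ← ht, ← two_mul, inv_mul_cancel_left₀ h2]

end AntiMultiplicative

theorem stmt6_general {K : Type*} [DivisionRing K] (σ : K → K) (ε : K)
    (hadd : ∀ a b : K, σ (a + b) = σ a + σ b)
    (hmul : ∀ a b : K, σ (a * b) = σ b * σ a)
    (hε : σ ε * ε = 1)
    (hσ2 : ∀ t : K, σ (σ t) = ε * t * ε⁻¹) :
    Kse σ (-ε) = Kup σ (-ε) ↔ Kup σ ε = Kse σ ε := by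
  by_cases h2 : (2 : K) = 0
  · have hneg : -ε = ε := neg_eq_iff_add_eq_zero.mpr (by rw [← two_mul, h2, zero_mul])
    rw [hneg, eq_comm]
  have hε0 : ε ≠ 0 := right_ne_zero_of_mul_eq_one hε
  have hzero : σ 0 = 0 := map_zero (AddMonoidHom.mk' σ hadd)
  have hone : σ 1 = 1 :=
    map_one_of_map_map_one hmul hzero (by rw [hσ2, mul_one, mul_inv_cancel₀ hε0])
  have hnegε : σ (-ε) * -ε = 1 := by
    rw [show σ (-ε) = -σ ε from map_neg (AddMonoidHom.mk' σ hadd) ε, neg_mul_neg, hε]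
  have hσ2neg : ∀ t : K, σ (σ t) = -ε * t * (-ε)⁻¹ := by simp [hσ2]
  exact iff_of_true
    ((Kse_subset_Kup hadd hmul hnegε hσ2neg).antisymm (Kup_subset_Kse hadd hmul hone h2 _))
    ((Kup_subset_Kse hadd hmul hone h2 ε).antisymm (Kse_subset_Kup hadd hmul hε hσ2))

/-- `(σ,ε)` is of trace type (i.e. `K_{σ,-ε} = K^{σ,-ε}`) iff
`K^{σ,ε} = K_{σ,ε}` (i.e. `K^{σ,ε}/K_{σ,ε}` is trivial). -/
theorem stmt6 {K : Type*} [DivisionRing K] (σ : K → K) (ε : K)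
    (hadd : ∀ a b : K, σ (a + b) = σ a + σ b)
    (hmul : ∀ a b : K, σ (a * b) = σ b * σ a)
    (hbij : Function.Bijective σ)
    (hε : σ ε * ε = 1)
    (hσ2 : ∀ t : K, σ (σ t) = ε * t * ε⁻¹) :
    Kse σ (-ε) = Kup σ (-ε) ↔ Kup σ ε = Kse σ ε :=
  stmt6_general σ ε hadd hmul hε hσ2
end

section
/- If K_{σ,ε} ≠ K, then a (σ,ε)-quadratic form q on V admits a unique sesquilinearization: if f and f' are trace-valued (σ,ε)-sesquilinear forms on V with q(x+y) - q(x) - q(y) = f(x,y) + K_{σ,ε} = f'(x,y) + K_{σ,ε} for all x,y ∈ V, then f = f'. -/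
/-! The difference `g - f` takes values in `K_{σ,ε}` and is right `K`-linear in its second
argument, so a single nonzero value would force `K_{σ,ε} = K`. -/

section DivisionRing

variable {K : Type*} [DivisionRing K]

theorem AddSubgroup.eq_zero_of_forall_mul_mem {N : AddSubgroup K} (hN : N ≠ ⊤) {d : K}
    (hd : ∀ μ : K, d * μ ∈ N) : d = 0 := by
  by_contra hd0
  refine hN (eq_top_iff.mpr fun z _ => ?_)
  simpa [← mul_assoc, mul_inv_cancel₀ hd0] using hd (d⁻¹ * z)

theorem apply_smul_right_of_sesquilinear {V : Type*} [AddCommGroup V] [Module K V]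
    (σ : K → K) {f : V → V → K}
    (hfs : ∀ (lam mu : K) (x y : V), f (lam • x) (mu • y) = σ lam * f x y * mu)
    (μ : K) (x y : V) : f x (μ • y) = f x y * μ := by
  have hσ1_mul : σ 1 * f x y = f x y := by simpa using (hfs 1 1 x y).symm
  simpa [hσ1_mul] using hfs 1 μ x y

end DivisionRing

theorem stmt10_general {K : Type*} [DivisionRing K] (σ : K → K) (ε : K)
    (hproper : Kse σ ε ≠ Set.univ)
    (N : AddSubgroup K) (hN : (N : Set K) = Kse σ ε)
    {V : Type*} [AddCommGroup V] [Module K V]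
    (q : V → K ⧸ N) (f g : V → V → K)
    (hfs : ∀ (lam mu : K) (x y : V), f (lam • x) (mu • y) = σ lam * f x y * mu)
    (hgs : ∀ (lam mu : K) (x y : V), g (lam • x) (mu • y) = σ lam * g x y * mu)
    (hqf : ∀ x y : V, q (x + y) = q x + q y + QuotientAddGroup.mk (f x y))
    (hqg : ∀ x y : V, q (x + y) = q x + q y + QuotientAddGroup.mk (g x y)) :
    f = g := by
  have hNtop : N ≠ ⊤ := by rwa [Ne, ← AddSubgroup.coe_eq_univ, hN]
  have hdiff_mem : ∀ x y : V, g x y - f x y ∈ N := fun x y =>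
    QuotientAddGroup.eq_iff_sub_mem.mp (add_left_cancel ((hqg x y).symm.trans (hqf x y)))
  funext x y
  refine (sub_eq_zero.mp (AddSubgroup.eq_zero_of_forall_mul_mem hNtop fun μ => ?_)).symm
  simpa [apply_smul_right_of_sesquilinear σ hfs, apply_smul_right_of_sesquilinear σ hgs, sub_mul]
    using hdiff_mem x (μ • y)

/-- If `K_{σ,ε} ≠ K`, a `(σ,ε)`-quadratic form `q : V → K/K_{σ,ε}` admits a
unique sesquilinearization: if `f` and `g` are trace-valued
`(σ,ε)`-sesquilinear forms with
`q(x+y) = q(x) + q(y) + (f(x,y) + K_{σ,ε}) = q(x) + q(y) + (g(x,y) + K_{σ,ε})`,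
then `f = g`. -/
theorem stmt10 {K : Type*} [DivisionRing K] (σ : K → K) (ε : K)
    (hadd : ∀ a b : K, σ (a + b) = σ a + σ b)
    (hmul : ∀ a b : K, σ (a * b) = σ b * σ a)
    (hbij : Function.Bijective σ)
    (hε : σ ε * ε = 1)
    (hσ2 : ∀ t : K, σ (σ t) = ε * t * ε⁻¹)
    (hproper : Kse σ ε ≠ Set.univ)
    (N : AddSubgroup K) (hN : (N : Set K) = Kse σ ε)
    {V : Type*} [AddCommGroup V] [Module K V]
    (q : V → K ⧸ N) (f g : V → V → K)
    (hfa : ∀ x xx y : V, f (x + xx) y = f x y + f xx y)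
    (hfb : ∀ x y yy : V, f x (y + yy) = f x y + f x yy)
    (hfs : ∀ (lam mu : K) (x y : V), f (lam • x) (mu • y) = σ lam * f x y * mu)
    (hfr : ∀ x y : V, f y x = σ (f x y) * ε)
    (hft : ∀ x : V, ∃ t : K, f x x = t + σ t * ε)
    (hga : ∀ x xx y : V, g (x + xx) y = g x y + g xx y)
    (hgb : ∀ x y yy : V, g x (y + yy) = g x y + g x yy)
    (hgs : ∀ (lam mu : K) (x y : V), g (lam • x) (mu • y) = σ lam * g x y * mu)
    (hgr : ∀ x y : V, g y x = σ (g x y) * ε)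
    (hgt : ∀ x : V, ∃ t : K, g x x = t + σ t * ε)
    (hq : ∀ (lam : K) (x : V) (t : K), q x = QuotientAddGroup.mk t →
      q (lam • x) = QuotientAddGroup.mk (σ lam * t * lam))
    (hqf : ∀ x y : V, q (x + y) = q x + q y + QuotientAddGroup.mk (f x y))
    (hqg : ∀ x y : V, q (x + y) = q x + q y + QuotientAddGroup.mk (g x y)) :
    f = g :=
  stmt10_general σ ε hproper N hN q f g hfs hgs hqf hqg
end

section
/- Let q : V → K̄/R̄ be a generalized (σ,ε)-quadratic form with co-defect R̄ ≠ K̄ and sesquilinearization f. Then the preimage R of R̄ in K is contained in K^{σ,ε} := {t ∈ K : t = -t^σ·ε}; equivalently, R̄ ⊆ K^{σ,ε}/K_{σ,ε}. -/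
/-
For `r ∈ R`, the closure of `R` under `t ↦ λ^σ t λ`, applied to `λ = 1 + μ`, puts the "trace"
`r μ + μ^σ r` in `R`; subtracting the element `rμ - (rμ)^σ ε` of `K_{σ,ε} ⊆ R` leaves
`μ^σ (r + r^σ ε) ∈ R`. As `σ` is onto, `R` then contains `K · (r + r^σ ε)`, which is all of `K`
unless `r + r^σ ε = 0`, i.e. unless `r ∈ K^{σ,ε}`.
-/

theorem map_one_of_map_mul_rev {K : Type*} [DivisionRing K] {σ : K → K}
    (hmul : ∀ a b : K, σ (a * b) = σ b * σ a) (hsurj : Function.Surjective σ) : σ 1 = 1 := by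
  obtain ⟨u, hu⟩ := hsurj 1
  simpa [hu] using (hmul u 1).symm

theorem AddSubgroup.eq_top_of_forall_mul_mem {K : Type*} [DivisionRing K] (R : AddSubgroup K)
    {s : K} (hs : s ≠ 0) (hR : ∀ c : K, c * s ∈ R) : R = ⊤ :=
  eq_top_iff.2 fun c _ => by simpa [hs] using hR (c * s⁻¹)

section

variable {K : Type*} [DivisionRing K] {σ : K → K} {ε : K} {R : AddSubgroup K}

theorem mul_add_map_mul_mem (hadd : ∀ a b : K, σ (a + b) = σ a + σ b) (hone : σ 1 = 1)
    (hR : ∀ r ∈ R, ∀ lam : K, σ lam * r * lam ∈ R) {r : K} (hr : r ∈ R) (μ : K) :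
    r * μ + σ μ * r ∈ R := by
  have hexp : σ (1 + μ) * r * (1 + μ) - σ μ * r * μ - r = r * μ + σ μ * r := by
    rw [hadd, hone]; noncomm_ring
  exact hexp ▸ R.sub_mem (R.sub_mem (hR r hr (1 + μ)) (hR r hr μ)) hr

theorem map_mul_add_map_mul_mem (hadd : ∀ a b : K, σ (a + b) = σ a + σ b)
    (hmul : ∀ a b : K, σ (a * b) = σ b * σ a) (hone : σ 1 = 1) (hRK : Kse σ ε ⊆ (R : Set K))
    (hR : ∀ r ∈ R, ∀ lam : K, σ lam * r * lam ∈ R) {r : K} (hr : r ∈ R) (μ : K) :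
    σ μ * (r + σ r * ε) ∈ R := by
  have hse : r * μ - σ (r * μ) * ε ∈ R := hRK ⟨r * μ, rfl⟩
  have hexp : r * μ + σ μ * r - (r * μ - σ (r * μ) * ε) = σ μ * (r + σ r * ε) := by
    rw [hmul]; noncomm_ring
  exact hexp ▸ R.sub_mem (mul_add_map_mul_mem hadd hone hR hr μ) hse

end

theorem stmt11_general {K : Type*} [DivisionRing K] (σ : K → K) (ε : K)
    (hadd : ∀ a b : K, σ (a + b) = σ a + σ b)
    (hmul : ∀ a b : K, σ (a * b) = σ b * σ a)
    (hbij : Function.Bijective σ)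
    (R : AddSubgroup K)
    (hRK : Kse σ ε ⊆ (R : Set K))
    (hRclosed : ∀ r ∈ R, ∀ lam : K, σ lam * r * lam ∈ R)
    (hRproper : (R : Set K) ≠ Set.univ) :
    (R : Set K) ⊆ Kup σ ε := by
  intro r hr
  by_contra hr'
  have hs : r + σ r * ε ≠ 0 := fun h => hr' (eq_neg_of_add_eq_zero_left h)
  have hone := map_one_of_map_mul_rev hmul hbij.2
  refine hRproper (AddSubgroup.coe_eq_univ.2 (R.eq_top_of_forall_mul_mem hs fun c => ?_))
  obtain ⟨μ, rfl⟩ := hbij.2 c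
  exact map_mul_add_map_mul_mem hadd hmul hone hRK hRclosed hr μ

/-- For a generalized `(σ,ε)`-quadratic form `q : V → K̄/R̄` with co-defect
`R̄ ≠ K̄` and sesquilinearization `f`, the preimage `R` of `R̄` in `K` is
contained in `K^{σ,ε}`. -/
theorem stmt11 {K : Type*} [DivisionRing K] (σ : K → K) (ε : K)
    (hadd : ∀ a b : K, σ (a + b) = σ a + σ b)
    (hmul : ∀ a b : K, σ (a * b) = σ b * σ a)
    (hbij : Function.Bijective σ)
    (hε : σ ε * ε = 1)
    (hσ2 : ∀ t : K, σ (σ t) = ε * t * ε⁻¹)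
    (R : AddSubgroup K)
    (hRK : Kse σ ε ⊆ (R : Set K))
    (hRclosed : ∀ r ∈ R, ∀ lam : K, σ lam * r * lam ∈ R)
    (hRproper : (R : Set K) ≠ Set.univ)
    {V : Type*} [AddCommGroup V] [Module K V]
    (q : V → K ⧸ R) (f : V → V → K)
    (hfa : ∀ x xx y : V, f (x + xx) y = f x y + f xx y)
    (hfb : ∀ x y yy : V, f x (y + yy) = f x y + f x yy)
    (hfs : ∀ (lam mu : K) (x y : V), f (lam • x) (mu • y) = σ lam * f x y * mu)
    (hfr : ∀ x y : V, f y x = σ (f x y) * ε)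
    (hft : ∀ x : V, ∃ t : K, f x x = t + σ t * ε)
    (hq : ∀ (lam : K) (x : V) (t : K), q x = QuotientAddGroup.mk t →
      q (lam • x) = QuotientAddGroup.mk (σ lam * t * lam))
    (hqf : ∀ x y : V, q (x + y) = q x + q y + QuotientAddGroup.mk (f x y)) :
    (R : Set K) ⊆ Kup σ ε :=
  stmt11_general σ ε hadd hmul hbij R hRK hRclosed hRproper
end

section
/- Let q : V → K̄/R̄ be a generalized (σ,ε)-quadratic form with R̄ ≠ K̄ and sesquilinearization f. For every x ∈ V, if q(x) = 0 then f(x,x) = 0. -/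
/-! If `q x = 0`, then `q` vanishes on the whole line `xK`, so the polarization identity for
`μ x` and `λ x` gives `f(x,x)^σ·f(x,x)·λ ∈ R̄` for every `λ`. Since `f(x,x) = f(x,x)^σ·ε`,
the factor `f(x,x)^σ·f(x,x)` is nonzero unless `f(x,x) = 0`, and then `R̄` would be all of `K`. -/

theorem AddSubgroup.coe_eq_univ_of_forall_mul_mem {K : Type*} [DivisionRing K]
    (R : AddSubgroup K) {a : K} (ha : a ≠ 0) (h : ∀ l : K, a * l ∈ R) :
    (R : Set K) = Set.univ :=
  Set.eq_univ_of_forall fun w => by simpa [← mul_assoc, mul_inv_cancel₀ ha] using h (a⁻¹ * w)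

section QuadraticForm

variable {K : Type*} [Ring K] {σ : K → K} {R : AddSubgroup K}
  {V : Type*} [AddCommGroup V] [Module K V] {q : V → K ⧸ R} {f : V → V → K}

theorem quadForm_smul_eq_zero
    (hq : ∀ (lam : K) (x : V) (t : K), q x = QuotientAddGroup.mk t →
      q (lam • x) = QuotientAddGroup.mk (σ lam * t * lam))
    {x : V} (hx : q x = 0) (lam : K) : q (lam • x) = 0 := by
  simpa using hq lam x 0 hx

theorem sesqForm_self_mul_mem_of_quadForm_eq_zero
    (hfs : ∀ (lam mu : K) (x y : V), f (lam • x) (mu • y) = σ lam * f x y * mu)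
    (hq : ∀ (lam : K) (x : V) (t : K), q x = QuotientAddGroup.mk t →
      q (lam • x) = QuotientAddGroup.mk (σ lam * t * lam))
    (hqf : ∀ x y : V, q (x + y) = q x + q y + QuotientAddGroup.mk (f x y))
    {x : V} (hx : q x = 0) (mu lam : K) : σ mu * f x x * lam ∈ R := by
  have hpolar := hqf (mu • x) (lam • x)
  rw [← add_smul, hfs, quadForm_smul_eq_zero hq hx, quadForm_smul_eq_zero hq hx,
    quadForm_smul_eq_zero hq hx, zero_add, zero_add] at hpolar
  exact (QuotientAddGroup.eq_zero_iff _).mp hpolar.symm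

end QuadraticForm

theorem stmt12_general {K : Type*} [DivisionRing K] (σ : K → K) (ε : K)
    (R : AddSubgroup K)
    (hRproper : (R : Set K) ≠ Set.univ)
    {V : Type*} [AddCommGroup V] [Module K V]
    (q : V → K ⧸ R) (f : V → V → K)
    (hfs : ∀ (lam mu : K) (x y : V), f (lam • x) (mu • y) = σ lam * f x y * mu)
    (hfr : ∀ x y : V, f y x = σ (f x y) * ε)
    (hq : ∀ (lam : K) (x : V) (t : K), q x = QuotientAddGroup.mk t →
      q (lam • x) = QuotientAddGroup.mk (σ lam * t * lam))
    (hqf : ∀ x y : V, q (x + y) = q x + q y + QuotientAddGroup.mk (f x y)) :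
    ∀ x : V, q x = 0 → f x x = 0 := by
  intro x hx
  by_contra hfx
  have hσfx : σ (f x x) ≠ 0 := fun h0 => hfx (by rw [hfr x x, h0, zero_mul])
  refine hRproper (R.coe_eq_univ_of_forall_mul_mem (mul_ne_zero hσfx hfx) fun lam => ?_)
  exact sesqForm_self_mul_mem_of_quadForm_eq_zero hfs hq hqf hx (f x x) lam

/-- For a generalized `(σ,ε)`-quadratic form `q` with co-defect `R̄ ≠ K̄` and
sesquilinearization `f`: if `q(x) = 0` then `f(x,x) = 0`. -/
theorem stmt12 {K : Type*} [DivisionRing K] (σ : K → K) (ε : K)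
    (hadd : ∀ a b : K, σ (a + b) = σ a + σ b)
    (hmul : ∀ a b : K, σ (a * b) = σ b * σ a)
    (hbij : Function.Bijective σ)
    (hε : σ ε * ε = 1)
    (hσ2 : ∀ t : K, σ (σ t) = ε * t * ε⁻¹)
    (R : AddSubgroup K)
    (hRK : Kse σ ε ⊆ (R : Set K))
    (hRclosed : ∀ r ∈ R, ∀ lam : K, σ lam * r * lam ∈ R)
    (hRproper : (R : Set K) ≠ Set.univ)
    {V : Type*} [AddCommGroup V] [Module K V]
    (q : V → K ⧸ R) (f : V → V → K)
    (hfa : ∀ x xx y : V, f (x + xx) y = f x y + f xx y)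
    (hfb : ∀ x y yy : V, f x (y + yy) = f x y + f x yy)
    (hfs : ∀ (lam mu : K) (x y : V), f (lam • x) (mu • y) = σ lam * f x y * mu)
    (hfr : ∀ x y : V, f y x = σ (f x y) * ε)
    (hft : ∀ x : V, ∃ t : K, f x x = t + σ t * ε)
    (hq : ∀ (lam : K) (x : V) (t : K), q x = QuotientAddGroup.mk t →
      q (lam • x) = QuotientAddGroup.mk (σ lam * t * lam))
    (hqf : ∀ x y : V, q (x + y) = q x + q y + QuotientAddGroup.mk (f x y)) :
    ∀ x : V, q x = 0 → f x x = 0 :=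
  stmt12_general σ ε R hRproper q f hfs hfr hq hqf
end

section
/- Let q : V → K̄/R̄ be a non-trivial generalized pseudo-quadratic form with sesquilinearization f, U ⊆ Rad(f) a K-subspace with U ∩ {u : q(u)=0} = {0}, and let R̄_U be the subgroup of K̄ containing R̄ with R̄_U/R̄ = q(U). Then the map q_U : V/U → K̄/R̄_U sending x+U to (any representative of q(x)) + R̄_U is well-defined, i.e., if x - x' ∈ U then q(x) and q(x') have the same image in K̄/R̄_U. -/
theorem apply_sub_of_polar_eq_zero {V Q : Type*} [AddCommGroup V] [AddCommGroup Q]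
    (q : V → Q) (b : V → V → Q) (hq : ∀ x y, q (x + y) = q x + q y + b x y)
    {x y : V} (h : b (x - y) y = 0) : q (x - y) = q x - q y := by
  have hx := hq (x - y) y
  rw [sub_add_cancel, h, add_zero] at hx
  exact eq_sub_of_add_eq hx.symm

theorem stmt17_general {K : Type*} [DivisionRing K]
    (R : AddSubgroup K)
    {V : Type*} [AddCommGroup V] [Module K V]
    (q : V → K ⧸ R) (f : V → V → K)
    (hqf : ∀ x y : V, q (x + y) = q x + q y + QuotientAddGroup.mk (f x y))
    (U : Submodule K V)
    (hUrad : ∀ u ∈ U, ∀ y : V, f u y = 0)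
    (RU : AddSubgroup K)
    (hRU : ∀ t : K, t ∈ RU ↔
      (QuotientAddGroup.mk t : K ⧸ R) ∈ q '' (U : Set V)) :
    ∀ x xx : V, x - xx ∈ U →
      ∀ t tt : K, q x = QuotientAddGroup.mk t → q xx = QuotientAddGroup.mk tt →
        t - tt ∈ RU := by
  intro x xx hU t tt hx hxx
  have hq_sub : q (x - xx) = q x - q xx :=
    apply_sub_of_polar_eq_zero q (fun x y => QuotientAddGroup.mk (f x y)) hqf
      (by simp only [hUrad _ hU, QuotientAddGroup.mk_zero])
  rw [hRU]
  exact ⟨x - xx, hU, by rw [hq_sub, hx, hxx, QuotientAddGroup.mk_sub]⟩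

/-- Well-definedness of the quotient form `q_U : V/U → K̄/R̄_U`: for
`U ⊆ Rad(f)` with `U ∩ {u : q(u) = 0} = 0` and `R̄_U/R̄ = q(U)`, if
`x - x' ∈ U` then `q(x)` and `q(x')` have the same image modulo `R_U`. -/
theorem stmt17 {K : Type*} [DivisionRing K] (σ : K → K) (ε : K)
    (hadd : ∀ a b : K, σ (a + b) = σ a + σ b)
    (hmul : ∀ a b : K, σ (a * b) = σ b * σ a)
    (hbij : Function.Bijective σ)
    (hε : σ ε * ε = 1)
    (hσ2 : ∀ t : K, σ (σ t) = ε * t * ε⁻¹)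
    (R : AddSubgroup K)
    (hRK : Kse σ ε ⊆ (R : Set K))
    (hRclosed : ∀ r ∈ R, ∀ lam : K, σ lam * r * lam ∈ R)
    (hRproper : (R : Set K) ≠ Set.univ)
    {V : Type*} [AddCommGroup V] [Module K V]
    (q : V → K ⧸ R) (f : V → V → K)
    (hfa : ∀ x xx y : V, f (x + xx) y = f x y + f xx y)
    (hfb : ∀ x y yy : V, f x (y + yy) = f x y + f x yy)
    (hfs : ∀ (lam mu : K) (x y : V), f (lam • x) (mu • y) = σ lam * f x y * mu)
    (hfr : ∀ x y : V, f y x = σ (f x y) * ε)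
    (hft : ∀ x : V, ∃ t : K, f x x = t + σ t * ε)
    (hq : ∀ (lam : K) (x : V) (t : K), q x = QuotientAddGroup.mk t →
      q (lam • x) = QuotientAddGroup.mk (σ lam * t * lam))
    (hqf : ∀ x y : V, q (x + y) = q x + q y + QuotientAddGroup.mk (f x y))
    (hqnt : ∃ v : V, q v ≠ 0)
    (U : Submodule K V)
    (hUrad : ∀ u ∈ U, ∀ y : V, f u y = 0)
    (hUint : ∀ u ∈ U, q u = 0 → u = 0)
    (RU : AddSubgroup K) (hRRU : R ≤ RU)
    (hRU : ∀ t : K, t ∈ RU ↔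
      (QuotientAddGroup.mk t : K ⧸ R) ∈ q '' (U : Set V)) :
    ∀ x xx : V, x - xx ∈ U →
      ∀ t tt : K, q x = QuotientAddGroup.mk t → q xx = QuotientAddGroup.mk tt →
        t - tt ∈ RU :=
  stmt17_general R q f hqf U hUrad RU hRU
end

section
/- Let f be a nonzero trace-valued (σ,ε)-sesquilinear form on V such that for every x ∈ V, f(x,x) = 0 (i.e., every point is isotropic). Then σ = id, ε = -1, and f is an alternating bilinear form; in particular K is commutative. -/
/-!
Polarising `f (x + y) (x + y) = 0` makes `f` skew-symmetric, and a nonzero form takes every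
value of `K` (scale the second argument). Comparing `f y x = -f x y` with `f y x = σ (f x y) ε`
therefore gives `σ a * ε = -a` for all `a`; at `a = ε` the admissibility condition `σ ε * ε = 1`
yields `ε = -1`, hence `σ = id`, and then the anti-multiplicativity of `σ` says that `K` is
commutative.
-/

theorem map_one_of_map_mul_rev_s18 {M : Type*} [MonoidWithZero M] [IsLeftCancelMulZero M] {σ : M → M}
    (hmul : ∀ a b, σ (a * b) = σ b * σ a) (hne : ∃ a, σ a ≠ 0) : σ 1 = 1 := by
  obtain ⟨a, ha⟩ := hne
  have hσ1 : σ 1 ≠ 0 := fun h => ha (by rw [← mul_one a, hmul, h, zero_mul])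
  exact mul_left_cancel₀ hσ1 (by rw [← hmul, mul_one, mul_one])

theorem apply_swap_eq_neg_of_apply_self_eq_zero {R V : Type*} [AddCommGroup R] [AddCommGroup V]
    {f : V → V → R} (hfa : ∀ x x' y, f (x + x') y = f x y + f x' y)
    (hfb : ∀ x y y', f x (y + y') = f x y + f x y') (halt : ∀ x, f x x = 0) (x y : V) :
    f y x = -f x y := by
  have h := halt (x + y)
  rw [hfa, hfb, hfb, halt, halt, zero_add, add_zero] at h
  exact eq_neg_of_add_eq_zero_right h

theorem exists_apply_eq_of_ne_zero {K V : Type*} [DivisionRing K] [AddCommGroup V] [Module K V]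
    {f : V → V → K} (hlin : ∀ (μ : K) x y, f x (μ • y) = f x y * μ)
    (hfnz : ∃ x y, f x y ≠ 0) (a : K) : ∃ x y, f x y = a := by
  obtain ⟨x, y, hxy⟩ := hfnz
  exact ⟨x, ((f x y)⁻¹ * a) • y, by rw [hlin, mul_inv_cancel_left₀ hxy]⟩

theorem stmt18_general {K : Type*} [DivisionRing K] (σ : K → K) (ε : K)
    (hmul : ∀ a b : K, σ (a * b) = σ b * σ a)
    (hε : σ ε * ε = 1)
    {V : Type*} [AddCommGroup V] [Module K V]
    (f : V → V → K)
    (hfa : ∀ x xx y : V, f (x + xx) y = f x y + f xx y)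
    (hfb : ∀ x y yy : V, f x (y + yy) = f x y + f x yy)
    (hfs : ∀ (lam mu : K) (x y : V), f (lam • x) (mu • y) = σ lam * f x y * mu)
    (hfr : ∀ x y : V, f y x = σ (f x y) * ε)
    (hfnz : ∃ x y : V, f x y ≠ 0)
    (halt : ∀ x : V, f x x = 0) :
    (∀ t : K, σ t = t) ∧ ε = -1 ∧ (∀ a b : K, a * b = b * a) := by
  have hσ1 : σ 1 = 1 :=
    map_one_of_map_mul_rev_s18 hmul ⟨ε, fun h => by rw [h, zero_mul] at hε; exact zero_ne_one hε⟩
  have hlin : ∀ (μ : K) x y, f x (μ • y) = f x y * μ := fun μ x y => by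
    simpa only [one_smul, hσ1, one_mul] using hfs 1 μ x y
  have hval : ∀ a, σ a * ε = -a := fun a => by
    obtain ⟨x, y, rfl⟩ := exists_apply_eq_of_ne_zero hlin hfnz a
    rw [← hfr, apply_swap_eq_neg_of_apply_self_eq_zero hfa hfb halt]
  have hε1 : ε = -1 := neg_eq_iff_eq_neg.mp ((hval ε).symm.trans hε)
  have hid : ∀ t, σ t = t := fun t => neg_injective (by rw [← hval t, hε1, mul_neg_one])
  exact ⟨hid, hε1, fun a b => by simpa only [hid] using hmul a b⟩

/-- A nonzero trace-valued `(σ,ε)`-sesquilinear form with `f(x,x) = 0` for all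
`x` forces `σ = id` and `ε = -1`; in particular `f` is an alternating bilinear
form and `K` is commutative. -/
theorem stmt18 {K : Type*} [DivisionRing K] (σ : K → K) (ε : K)
    (hadd : ∀ a b : K, σ (a + b) = σ a + σ b)
    (hmul : ∀ a b : K, σ (a * b) = σ b * σ a)
    (hbij : Function.Bijective σ)
    (hε : σ ε * ε = 1)
    (hσ2 : ∀ t : K, σ (σ t) = ε * t * ε⁻¹)
    {V : Type*} [AddCommGroup V] [Module K V]
    (f : V → V → K)
    (hfa : ∀ x xx y : V, f (x + xx) y = f x y + f xx y)
    (hfb : ∀ x y yy : V, f x (y + yy) = f x y + f x yy)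
    (hfs : ∀ (lam mu : K) (x y : V), f (lam • x) (mu • y) = σ lam * f x y * mu)
    (hfr : ∀ x y : V, f y x = σ (f x y) * ε)
    (hft : ∀ x : V, ∃ t : K, f x x = t + σ t * ε)
    (hfnz : ∃ x y : V, f x y ≠ 0)
    (halt : ∀ x : V, f x x = 0) :
    (∀ t : K, σ t = t) ∧ ε = -1 ∧ (∀ a b : K, a * b = b * a) :=
  stmt18_general σ ε hmul hε f hfa hfb hfs hfr hfnz halt
end

section
/- Let E = (e_i)_{i∈I} be a basis of V indexed by a linearly ordered set I, with f(e_i,e_i) = 0 for all i, and define g_E(Σ e_i λ_i, Σ e_j μ_j) := Σ_{i<j} λ_i^σ f(e_i,e_j) μ_j. Then g_E is a σ-sesquilinear form and f(x,y) = g_E(x,y) + g_E(y,x)^σ ε for all x,y ∈ V. -/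
/-!
Expanding `x` and `y` in the basis, `f x y = ∑ᵢ ∑ⱼ f (xᵢ eᵢ) (yⱼ eⱼ)`. The terms with `i < j` make up
`g x y`; by `f y x = f(x, y)^σ ε` the terms with `j < i` make up `g(y, x)^σ ε`; the diagonal terms
vanish because `f (eᵢ, eᵢ) = 0`. Sesquilinearity of `g` holds term by term.
-/

namespace Module.Basis

variable {K V ι : Type*} [DivisionRing K] [AddCommGroup V] [Module K V]

theorem apply_eq_sum_repr (E : Basis ι K V) (F : V →+ V →+ K) (x y : V) :
    F x y = (E.repr x).sum fun i a => (E.repr y).sum fun j b => F (a • E i) (b • E j) := by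
  conv_lhs => rw [← E.linearCombination_repr x, ← E.linearCombination_repr y]
  simp only [Finsupp.linearCombination_apply]
  rw [map_finsuppSum F, AddMonoidHom.finsuppSum_apply]
  simp only [map_finsuppSum]

variable [LinearOrder ι]

noncomputable def upperForm (E : Basis ι K V) (F : V →+ V →+ K) (x y : V) : K :=
  (E.repr x).sum fun i a => (E.repr y).sum fun j b => if i < j then F (a • E i) (b • E j) else 0

variable (E : Basis ι K V) (F : V →+ V →+ K)

theorem upperForm_add_left (x x' y : V) :
    E.upperForm F (x + x') y = E.upperForm F x y + E.upperForm F x' y := by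
  unfold upperForm
  rw [map_add]
  refine Finsupp.sum_add_index' (fun i => by simp) fun i a a' => ?_
  rw [← Finsupp.sum_add]
  refine Finsupp.sum_congr fun j _ => ?_
  split_ifs <;> simp [add_smul]

theorem upperForm_add_right (x y y' : V) :
    E.upperForm F x (y + y') = E.upperForm F x y + E.upperForm F x y' := by
  unfold upperForm
  rw [← Finsupp.sum_add]
  refine Finsupp.sum_congr fun i _ => ?_
  rw [map_add]
  refine Finsupp.sum_add_index' (fun j => by simp) fun j b b' => ?_
  split_ifs <;> simp [add_smul]

theorem upperForm_smul_smul (σ : K → K)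
    (hF : ∀ (lam mu : K) (x y : V), F (lam • x) (mu • y) = σ lam * F x y * mu)
    (lam mu : K) (x y : V) :
    E.upperForm F (lam • x) (mu • y) = σ lam * E.upperForm F x y * mu := by
  unfold upperForm
  rw [map_smul, map_smul, Finsupp.sum_smul_index' (fun i => by simp), Finsupp.mul_sum,
    Finsupp.sum_mul]
  refine Finsupp.sum_congr fun i _ => ?_
  rw [Finsupp.sum_smul_index' (fun j => by simp), Finsupp.mul_sum, Finsupp.sum_mul]
  refine Finsupp.sum_congr fun j _ => ?_
  split_ifs <;> simp [mul_smul, hF]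

theorem upperForm_eq_sum (σ : K → K)
    (hF : ∀ (lam mu : K) (x y : V), F (lam • x) (mu • y) = σ lam * F x y * mu) (x y : V) :
    E.upperForm F x y = ∑ i ∈ (E.repr x).support, ∑ j ∈ (E.repr y).support,
      if i < j then σ (E.repr x i) * F (E i) (E j) * E.repr y j else 0 := by
  simp only [upperForm, Finsupp.sum, hF]

theorem apply_eq_upperForm_add_upperForm_swap (σ : K →+ K) (ε : K)
    (hF : ∀ (lam mu : K) (x y : V), F (lam • x) (mu • y) = σ lam * F x y * mu)
    (hFswap : ∀ x y : V, F y x = σ (F x y) * ε) (hdiag : ∀ i, F (E i) (E i) = 0) (x y : V) :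
    F x y = E.upperForm F x y + σ (E.upperForm F y x) * ε := by
  have hterm : ∀ (i j : ι) (a b : K), F (a • E i) (b • E j) =
      (if i < j then F (a • E i) (b • E j) else 0) +
        (if j < i then σ (F (b • E j) (a • E i)) * ε else 0) := by
    intro i j a b
    rcases lt_trichotomy i j with h | rfl | h
    · simp [h, h.not_gt]
    · simp [hF, hdiag]
    · simp [h, h.not_gt, ← hFswap]
  -- bundling `t ↦ σ t * ε` as an additive map lets it pass through the finite sums
  let τ : K →+ K := (AddMonoidHom.mulRight ε).comp σ
  have hτ : σ (E.upperForm F y x) * ε = τ (E.upperForm F y x) := rfl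
  rw [hτ, upperForm, upperForm]
  simp only [map_finsuppSum]
  rw [Finsupp.sum_comm (E.repr y), ← Finsupp.sum_add, E.apply_eq_sum_repr F]
  refine Finsupp.sum_congr fun i _ => ?_
  rw [← Finsupp.sum_add]
  refine Finsupp.sum_congr fun j _ => ?_
  rw [apply_ite τ, map_zero]
  exact hterm i j _ _

end Module.Basis

theorem stmt19_general {K : Type*} [DivisionRing K] (σ : K → K) (ε : K)
    (hadd : ∀ a b : K, σ (a + b) = σ a + σ b)
    {V : Type*} [AddCommGroup V] [Module K V]
    (f : V → V → K)
    (hfa : ∀ x xx y : V, f (x + xx) y = f x y + f xx y)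
    (hfb : ∀ x y yy : V, f x (y + yy) = f x y + f x yy)
    (hfs : ∀ (lam mu : K) (x y : V), f (lam • x) (mu • y) = σ lam * f x y * mu)
    (hfr : ∀ x y : V, f y x = σ (f x y) * ε)
    {ι : Type*} [LinearOrder ι] (E : Module.Basis ι K V)
    (hE : ∀ i : ι, f (E i) (E i) = 0)
    (g : V → V → K)
    (hg : ∀ x y : V, g x y =
      ∑ i ∈ (E.repr x).support, ∑ j ∈ (E.repr y).support,
        if i < j then σ (E.repr x i) * f (E i) (E j) * E.repr y j else 0) :
    (∀ x xx y : V, g (x + xx) y = g x y + g xx y) ∧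
    (∀ x y yy : V, g x (y + yy) = g x y + g x yy) ∧
    (∀ (lam mu : K) (x y : V), g (lam • x) (mu • y) = σ lam * g x y * mu) ∧
    (∀ x y : V, f x y = g x y + σ (g y x) * ε) := by
  let F : V →+ V →+ K :=
    AddMonoidHom.mk' (fun x => AddMonoidHom.mk' (f x) (hfb x)) fun x xx =>
      AddMonoidHom.ext (hfa x xx)
  have hg_eq : g = E.upperForm F :=
    funext₂ fun x y => (hg x y).trans (E.upperForm_eq_sum F σ hfs x y).symm
  subst hg_eq
  exact ⟨E.upperForm_add_left F, E.upperForm_add_right F, E.upperForm_smul_smul F σ hfs,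
    E.apply_eq_upperForm_add_upperForm_swap F (AddMonoidHom.mk' σ hadd) ε hfs hfr hE⟩

/-- Given a basis `E = (e_i)` over a linearly ordered index set with
`f(e_i,e_i) = 0`, the form
`g_E(Σ e_i λ_i, Σ e_j μ_j) = Σ_{i<j} λ_i^σ f(e_i,e_j) μ_j`
is σ-sesquilinear and `f(x,y) = g_E(x,y) + g_E(y,x)^σ ε` for all `x, y`. -/
theorem stmt19 {K : Type*} [DivisionRing K] (σ : K → K) (ε : K)
    (hadd : ∀ a b : K, σ (a + b) = σ a + σ b)
    (hmul : ∀ a b : K, σ (a * b) = σ b * σ a)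
    (hbij : Function.Bijective σ)
    (hε : σ ε * ε = 1)
    (hσ2 : ∀ t : K, σ (σ t) = ε * t * ε⁻¹)
    {V : Type*} [AddCommGroup V] [Module K V]
    (f : V → V → K)
    (hfa : ∀ x xx y : V, f (x + xx) y = f x y + f xx y)
    (hfb : ∀ x y yy : V, f x (y + yy) = f x y + f x yy)
    (hfs : ∀ (lam mu : K) (x y : V), f (lam • x) (mu • y) = σ lam * f x y * mu)
    (hfr : ∀ x y : V, f y x = σ (f x y) * ε)
    (hft : ∀ x : V, ∃ t : K, f x x = t + σ t * ε)
    {ι : Type*} [LinearOrder ι] (E : Module.Basis ι K V)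
    (hE : ∀ i : ι, f (E i) (E i) = 0)
    (g : V → V → K)
    (hg : ∀ x y : V, g x y =
      ∑ i ∈ (E.repr x).support, ∑ j ∈ (E.repr y).support,
        if i < j then σ (E.repr x i) * f (E i) (E j) * E.repr y j else 0) :
    (∀ x xx y : V, g (x + xx) y = g x y + g xx y) ∧
    (∀ x y yy : V, g x (y + yy) = g x y + g x yy) ∧
    (∀ (lam mu : K) (x y : V), g (lam • x) (mu • y) = σ lam * g x y * mu) ∧
    (∀ x y : V, f x y = g x y + σ (g y x) * ε) :=
  stmt19_general σ ε hadd f hfa hfb hfs hfr E hE g hg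
end
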